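/- Let P, Q be g-anisotropic vectors with g(P,Q) ≠ 0 in a finite-dimensional real vector space with nondegenerate symmetric bilinear form g, p and q the associated rank-one idempotents, and ϖ(x,y) = (y∘x)/tr(y∘x) − x. Then ϖ(p,q) = −(ϖ(q,p)∘p)/tr(p∘q) − (1 − 1/tr(p∘q))·p. -/

import Mathlib

/-- The observer idempotent associated to a vector `P`: `X ↦ (g P X / g P P) • P`. -/
noncomputable def obs {V : Type*} [AddCommGroup V] [Module ℝ V]
    (g : LinearMap.BilinForm ℝ V) (P : V) : V →ₗ[ℝ] V :=
  (g P P)⁻¹ • ((LinearMap.toSpanSingleton ℝ V P).comp (g P))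

/-- `g` has Lorentzian signature (−,+,+,+) on a 4-dimensional real space. -/
def IsMinkowski {V : Type*} [AddCommGroup V] [Module ℝ V]
    (g : LinearMap.BilinForm ℝ V) : Prop :=
  ∃ b : Module.Basis (Fin 4) ℝ V, ∀ i j, g (b i) (b j) =
    if i = j then (if i = (0 : Fin 4) then (-1 : ℝ) else 1) else 0

/-- The binary relative velocity operator `ϖ(x,y) = (y∘x)/tr(y∘x) − x`. -/
noncomputable def vel {V : Type*} [AddCommGroup V] [Module ℝ V]
    (x y : V →ₗ[ℝ] V) : V →ₗ[ℝ] V :=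
  (LinearMap.trace ℝ V (y ∘ₗ x))⁻¹ • (y ∘ₗ x) - x

/-! Writing `s = tr(p∘q) = tr(q∘p)`, the only property of the observer `p` that is needed is
`p∘q∘p = s • p`, which holds for every map of rank at most one. With it,
`ϖ(q,p)∘p = s⁻¹ • p∘q∘p - q∘p = p - q∘p`, and solving for `q∘p` gives the formula.
When `s = 0` both sides equal `-p`, because `0⁻¹ = 0`. -/

namespace LinearMap

variable {K V : Type*} [Field K] [AddCommGroup V] [Module K V]

theorem toSpanSingleton_comp_comp_toSpanSingleton_comp (f : V →ₗ[K] K) (v : V) (A : V →ₗ[K] V) :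
    (toSpanSingleton K V v ∘ₗ f) ∘ₗ A ∘ₗ (toSpanSingleton K V v ∘ₗ f) =
      f (A v) • (toSpanSingleton K V v ∘ₗ f) := by
  ext X
  simp only [comp_apply, smul_apply, toSpanSingleton_apply, map_smul, smul_smul, mul_comm]

theorem trace_toSpanSingleton_comp_comp [FiniteDimensional K V] (f : V →ₗ[K] K) (v : V)
    (A : V →ₗ[K] V) :
    trace K V ((toSpanSingleton K V v ∘ₗ f) ∘ₗ A) = f (A v) := by
  have hrank_one : A ∘ₗ toSpanSingleton K V v ∘ₗ f = f.smulRight (A v) := by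
    ext X
    simp
  rw [trace_comp_comm', hrank_one, trace_smulRight]

end LinearMap

section

open LinearMap

variable {V : Type*} [AddCommGroup V] [Module ℝ V] [FiniteDimensional ℝ V]

theorem obs_comp_comp_obs (g : LinearMap.BilinForm ℝ V) (P : V)
    (A : V →ₗ[ℝ] V) :
    obs g P ∘ₗ A ∘ₗ obs g P = trace ℝ V (obs g P ∘ₗ A) • obs g P := by
  simp only [obs, smul_comp, comp_smul, toSpanSingleton_comp_comp_toSpanSingleton_comp,
    map_smul, trace_toSpanSingleton_comp_comp, smul_smul, smul_eq_mul]
  ring_nf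

theorem vel_eq_of_comp_comp_eq_trace_smul (p q : V →ₗ[ℝ] V)
    (hpqp : p ∘ₗ q ∘ₗ p = trace ℝ V (p ∘ₗ q) • p) :
    vel p q = -((trace ℝ V (p ∘ₗ q))⁻¹ • (vel q p ∘ₗ p)) - (1 - (trace ℝ V (p ∘ₗ q))⁻¹) • p := by
  have htrace : trace ℝ V (q ∘ₗ p) = trace ℝ V (p ∘ₗ q) := trace_comp_comm' p q
  rw [vel, vel, htrace, sub_comp, smul_comp, comp_assoc, hpqp]
  set s := trace ℝ V (p ∘ₗ q)
  rcases eq_or_ne s 0 with hs | hs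
  · simp [hs]
  · rw [smul_smul, inv_mul_cancel₀ hs, one_smul]
    module

end

theorem stmt_14_general (V : Type*) [AddCommGroup V] [Module ℝ V] [FiniteDimensional ℝ V]
    (g : LinearMap.BilinForm ℝ V)
    (P Q : V) :
    vel (obs g P) (obs g Q) =
      -((LinearMap.trace ℝ V (obs g P ∘ₗ obs g Q))⁻¹ •
          (vel (obs g Q) (obs g P) ∘ₗ obs g P)) -
        (1 - (LinearMap.trace ℝ V (obs g P ∘ₗ obs g Q))⁻¹) • obs g P :=
  vel_eq_of_comp_comp_eq_trace_smul _ _ (obs_comp_comp_obs g P (obs g Q))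

theorem stmt_14 (V : Type*) [AddCommGroup V] [Module ℝ V] [FiniteDimensional ℝ V]
    (g : LinearMap.BilinForm ℝ V) (hsymm : ∀ X Y : V, g X Y = g Y X)
    (hnd : g.Nondegenerate)
    (P Q : V) (hP : g P P ≠ 0) (hQ : g Q Q ≠ 0) (hPQ : g P Q ≠ 0) :
    vel (obs g P) (obs g Q) =
      -((LinearMap.trace ℝ V (obs g P ∘ₗ obs g Q))⁻¹ •
          (vel (obs g Q) (obs g P) ∘ₗ obs g P)) -
        (1 - (LinearMap.trace ℝ V (obs g P ∘ₗ obs g Q))⁻¹) • obs g P :=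
  stmt_14_general V g P Q
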